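/- arXiv:2309.16068 — 2 statements merged into one kernel-verified Lean document; each statement's English description precedes it below -/
import Mathlib

section
/- With all other parameters (Ω, C_H, C_S, C_D, f, w) fixed, there exists a constant C > 0 such that y₀*(‖κ‖_{L^∞}) / ( C_S^{-1} ln( C / ‖κ‖²_{L^∞} ) ) → 1 as ‖κ‖_{L^∞} → 0, where y₀*(t) denotes the threshold value y₀* computed with ‖κ‖_{L^∞} = t. -/
open MeasureTheory Filter Set
open scoped Topology NNReal ENNReal ComplexConjugate

noncomputable section
attribute [local instance] Classical.propDecidable

/-- Euclidean space `ℝ^d`. -/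
abbrev E (d : ℕ) := EuclideanSpace ℝ (Fin d)

variable {d : ℕ}

/-- A smooth, compactly supported (complex-valued) test function supported inside `Ω`. -/
def IsTest (Ω : Set (E d)) (φ : E d → ℂ) : Prop :=
  ContDiff ℝ (⊤ : ℕ∞) φ ∧ HasCompactSupport φ ∧ tsupport φ ⊆ Ω

/-- A smooth, compactly supported (real-valued) test function supported inside `Ω`. -/
def IsTestR (Ω : Set (E d)) (φ : E d → ℝ) : Prop :=
  ContDiff ℝ (⊤ : ℕ∞) φ ∧ HasCompactSupport φ ∧ tsupport φ ⊆ Ω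

/-- Membership in `L²(Ω)`. -/
def L2 (Ω : Set (E d)) (u : E d → ℂ) : Prop :=
  MemLp u 2 (volume.restrict Ω)

/-- The `L²(Ω)` norm. -/
def l2norm (Ω : Set (E d)) (u : E d → ℂ) : ℝ :=
  (eLpNorm u 2 (volume.restrict Ω)).toReal

/-- The `L^∞(Ω)` (essential supremum) norm. -/
def linfnorm (Ω : Set (E d)) (u : E d → ℂ) : ℝ :=
  (eLpNorm u ⊤ (volume.restrict Ω)).toReal

/-- The `L^p(Ω)` norm, `p` a real exponent. -/
def lpnorm (Ω : Set (E d)) (p : ℝ) (u : E d → ℂ) : ℝ :=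
  (eLpNorm u (ENNReal.ofReal p) (volume.restrict Ω)).toReal

/-- The `i`-th standard basis vector of `ℝ^d`. -/
def euclBasis (d : ℕ) (i : Fin d) : E d := EuclideanSpace.single i (1 : ℝ)

/-- `g` is the `i`-th weak partial derivative of `u` on `Ω`:
`∫_Ω u ∂_i φ = − ∫_Ω g φ` for all test functions `φ`. -/
def HasWeakDeriv (Ω : Set (E d)) (i : Fin d) (u g : E d → ℂ) : Prop :=
  ∀ φ : E d → ℂ, IsTest Ω φ →
    ∫ x in Ω, u x * fderiv ℝ φ x (euclBasis d i)
      = - ∫ x in Ω, g x * φ x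

/-- A choice of weak gradient of `u` on `Ω` (zero if no weak gradient exists).  Weak partial
derivatives are a.e. unique, so all `L^p`-norm statements about `wgrad` are unambiguous. -/
def wgrad (Ω : Set (E d)) (u : E d → ℂ) : Fin d → E d → ℂ :=
  if h : ∃ g : Fin d → E d → ℂ, ∀ i, HasWeakDeriv Ω i u (g i) then h.choose
  else fun _ _ => 0

/-- Membership in `H¹(Ω)`. -/
def MemH1 (Ω : Set (E d)) (u : E d → ℂ) : Prop :=
  L2 Ω u ∧ ∃ g : Fin d → E d → ℂ, ∀ i, HasWeakDeriv Ω i u (g i) ∧ L2 Ω (g i)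

/-- Membership in `H²(Ω)`. -/
def MemH2 (Ω : Set (E d)) (u : E d → ℂ) : Prop :=
  MemH1 Ω u ∧ ∀ i, MemH1 Ω (wgrad Ω u i)

/-- Membership in `H¹₀(Ω)`: an `H¹(Ω)` function that is approximated, together with its weak
gradient, in `L²(Ω)` by smooth compactly supported functions. -/
def MemH10 (Ω : Set (E d)) (u : E d → ℂ) : Prop :=
  MemH1 Ω u ∧ ∃ φ : ℕ → E d → ℂ, (∀ n, IsTest Ω (φ n)) ∧
    Tendsto (fun n => l2norm Ω (fun x => u x - φ n x)) atTop (𝓝 0) ∧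
    ∀ i, Tendsto
      (fun n => l2norm Ω (fun x => wgrad Ω u i x - fderiv ℝ (φ n) x (euclBasis d i)))
      atTop (𝓝 0)

/-- The principal eigenvalue of the Dirichlet Laplacian on `Ω`, as the infimum of the Rayleigh
quotient over (nonzero) test functions. -/
def lambda1 (Ω : Set (E d)) : ℝ :=
  sInf {r : ℝ | ∃ φ : E d → ℝ, IsTestR Ω φ ∧ (∫ x in Ω, (φ x) ^ 2) ≠ 0 ∧
    r = (∫ x in Ω, ‖fderiv ℝ φ x‖ ^ 2) / (∫ x in Ω, (φ x) ^ 2)}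

/-- The (squared) Gagliardo seminorm `[u]_{s'}²` on `Ω`, valued in `ℝ≥0∞`. -/
def gagliardoE (Ω : Set (E d)) (s' : ℝ) (u : E d → ℂ) : ℝ≥0∞ :=
  ∫⁻ x in Ω, ∫⁻ y in Ω,
    ((‖u x - u y‖₊ : ℝ≥0∞) ^ 2) / (edist x y) ^ ((d : ℝ) + 2 * s')

/-- Iterated weak derivative, taken along a list of coordinate directions. -/
def iwderiv (Ω : Set (E d)) (u : E d → ℂ) : List (Fin d) → E d → ℂ
  | [] => u
  | i :: l => wgrad Ω (iwderiv Ω u l) i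

/-- The list of coordinate directions encoding the multi-index `β`. -/
def multiIdx (d : ℕ) (β : Fin d → ℕ) : List (Fin d) :=
  ((List.finRange d).map fun i => List.replicate (β i) i).flatten

/-- Membership in the integer-order Sobolev space `H^k(Ω)`. -/
def MemHk (Ω : Set (E d)) (k : ℕ) (u : E d → ℂ) : Prop :=
  (∀ l : List (Fin d), l.length < k →
      ∃ g : Fin d → E d → ℂ, ∀ i, HasWeakDeriv Ω i (iwderiv Ω u l) (g i)) ∧
  ∀ l : List (Fin d), l.length ≤ k → L2 Ω (iwderiv Ω u l)

/-- The `H^k(Ω)` norm: `(∑_{|β| ≤ k} ‖∂^β u‖²_{L²})^{1/2}`. -/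
def hknorm (Ω : Set (E d)) (k : ℕ) (u : E d → ℂ) : ℝ :=
  Real.sqrt (∑ β ∈ Finset.univ.filter (fun β : Fin d → Fin (k + 1) => ∑ i, (β i : ℕ) ≤ k),
    l2norm Ω (iwderiv Ω u (multiIdx d fun i => (β i : ℕ))) ^ 2)

/-- The `H¹(Ω)` norm. -/
def h1norm (Ω : Set (E d)) (u : E d → ℂ) : ℝ := hknorm Ω 1 u

/-- The `H²(Ω)` norm. -/
def h2norm (Ω : Set (E d)) (u : E d → ℂ) : ℝ := hknorm Ω 2 u

/-- Membership in the (fractional) Sobolev space `H^s(Ω)`, `s = k + s'` with `k = ⌊s⌋`. -/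
def MemHs (Ω : Set (E d)) (s : ℝ) (u : E d → ℂ) : Prop :=
  MemHk Ω ⌊s⌋₊ u ∧ (s ≠ (⌊s⌋₊ : ℝ) → gagliardoE Ω (s - ⌊s⌋₊) u ≠ ⊤)

/-- The `H^s(Ω)` norm, `‖u‖_{H^s} = (‖u‖²_{H^⌊s⌋} + [u]²_{s−⌊s⌋})^{1/2}`. -/
def hsnorm (Ω : Set (E d)) (s : ℝ) (u : E d → ℂ) : ℝ :=
  if s = (⌊s⌋₊ : ℝ) then hknorm Ω ⌊s⌋₊ u
  else Real.sqrt (hknorm Ω ⌊s⌋₊ u ^ 2 + (gagliardoE Ω (s - ⌊s⌋₊) u).toReal)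

/-- Membership in `W^{1,p}(Ω)` (real exponent `p`). -/
def MemW1p (Ω : Set (E d)) (p : ℝ) (u : E d → ℂ) : Prop :=
  MemLp u (ENNReal.ofReal p) (volume.restrict Ω) ∧
  ∃ g : Fin d → E d → ℂ, ∀ i, HasWeakDeriv Ω i u (g i) ∧
    MemLp (g i) (ENNReal.ofReal p) (volume.restrict Ω)

/-- The `W^{1,p}(Ω)` norm `(‖u‖_p^p + ∑_i ‖∂_i u‖_p^p)^{1/p}`. -/
def w1pnorm (Ω : Set (E d)) (p : ℝ) (u : E d → ℂ) : ℝ :=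
  (lpnorm Ω p u ^ p + ∑ i, lpnorm Ω p (wgrad Ω u i) ^ p) ^ (1 / p)

/-- The Sobolev embedding constant `C_S(s)`: the operator norm of `H^s(Ω) ↪ L^∞(Ω)`. -/
def CSconst (Ω : Set (E d)) (s : ℝ) : ℝ :=
  sInf {C : ℝ | 0 ≤ C ∧ ∀ u : E d → ℂ, MemHs Ω s u → linfnorm Ω u ≤ C * hsnorm Ω s u}

/-- The operator `L u = −∇·(ε ∇u) + κ² u` (using choices of weak derivatives). -/
def Lop (Ω : Set (E d)) (ε : Fin d → Fin d → E d → ℂ) (ksq : E d → ℂ) (u : E d → ℂ) :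
    E d → ℂ :=
  fun x => -(∑ i, ∑ j, wgrad Ω (fun y => ε i j y * wgrad Ω u j y) i x) + ksq x * u x

/-- `C_D`: the operator norm of `L : H²(Ω) ∩ H¹₀(Ω) → L²(Ω)`. -/
def CDconst (Ω : Set (E d)) (ε : Fin d → Fin d → E d → ℂ) (ksq : E d → ℂ) : ℝ :=
  sInf {C : ℝ | 0 ≤ C ∧ ∀ u : E d → ℂ, MemH2 Ω u → MemH10 Ω u →
    l2norm Ω (Lop Ω ε ksq u) ≤ C * h2norm Ω u}

/-- `C_H`: the operator norm of `L⁻¹ : L²(Ω) → H²(Ω) ∩ H¹₀(Ω)`. -/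
def CHconst (Ω : Set (E d)) (ε : Fin d → Fin d → E d → ℂ) (ksq : E d → ℂ) : ℝ :=
  sInf {C : ℝ | 0 ≤ C ∧ ∀ f u : E d → ℂ, L2 Ω f → MemH2 Ω u → MemH10 Ω u →
    (∀ᵐ x ∂(volume.restrict Ω), Lop Ω ε ksq u x = f x) → h2norm Ω u ≤ C * l2norm Ω f}

/-- Weak solution of the linear PBE `−∇·(ε∇v) + κ²v = f` on `Ω` (tested against `H¹₀(Ω)`). -/
def WeakLinearSol (Ω : Set (E d)) (ε : Fin d → Fin d → E d → ℂ) (ksq f v : E d → ℂ) : Prop :=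
  ∀ φ : E d → ℂ, MemH10 Ω φ →
    (∫ x in Ω, ∑ i, ∑ j, ε i j x * wgrad Ω v j x * conj (wgrad Ω φ i x))
      + (∫ x in Ω, ksq x * v x * conj (φ x))
      = ∫ x in Ω, f x * conj (φ x)

/-- Uniform ellipticity of the tensor `ε` with constant `θ` (a.e. on `Ω`). -/
def UniformlyElliptic (Ω : Set (E d)) (ε : Fin d → Fin d → E d → ℂ) (θ : ℝ) : Prop :=
  ∀ᵐ x ∂(volume.restrict Ω), ∀ ξ : Fin d → ℂ,
    θ * ∑ i, ‖ξ i‖ ^ 2 ≤ (∑ i, ∑ j, ε i j x * ξ i * conj (ξ j)).re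

/-- `v ∈ W^{1,∞}(Ω)` with norm (bound on the values and on the gradient, i.e. the Lipschitz
constant on the convex set `Ω`) at most `C`. -/
def MemW1infWith (Ω : Set (E d)) (v : E d → ℂ) (C : ℝ) : Prop :=
  (∀ x ∈ Ω, ‖v x‖ ≤ C) ∧ LipschitzOnWith (Real.toNNReal C) v Ω

/-- The standing hypotheses (Hypotheses 1–3 of the paper): `Ω ⊂ ℝ^d` open, bounded and convex;
`ε` a symmetric `W^{1,∞}` tensor, uniformly elliptic with constant `θ > 0`; `κ² ∈ L^∞(Ω)` with
`Re κ² ≥ −μ` a.e., `μ ≥ 0`, and `μ/θ < λ₁(Ω)`. -/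
def StandingHyp (Ω : Set (E d)) (ε : Fin d → Fin d → E d → ℂ) (ksq : E d → ℂ)
    (θ μ : ℝ) : Prop :=
  IsOpen Ω ∧ Bornology.IsBounded Ω ∧ Convex ℝ Ω ∧
  (∃ Cε : ℝ, ∀ i j, MemW1infWith Ω (ε i j) Cε) ∧
  (∀ i j x, ε i j x = ε j i x) ∧
  0 < θ ∧ UniformlyElliptic Ω ε θ ∧
  MemLp ksq ⊤ (volume.restrict Ω) ∧ 0 ≤ μ ∧
  (∀ᵐ x ∂(volume.restrict Ω), -μ ≤ (ksq x).re) ∧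
  μ / θ < lambda1 Ω

/-- The nonlinearity `N(u) = κ²(sinh u − u)`. -/
def Nop (ksq : E d → ℂ) (u : E d → ℂ) : E d → ℂ :=
  fun x => ksq x * (Complex.sinh (u x) - u x)

/-- `|n_k|`, where `sinh t − t = ∑_{k ≥ 2} n_k t^k` (so `n_k = 1/k!` for odd `k ≥ 3`). -/
def nkabs (k : ℕ) : ℝ := if 2 ≤ k ∧ Odd k then ((k.factorial : ℝ))⁻¹ else 0

/-- `u` satisfies the non-linear Poisson–Boltzmann equation
`−∇·(ε∇u) + κ² sinh u = f` pointwise a.e. on `Ω`. -/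
def NPBEStrong (Ω : Set (E d)) (ε : Fin d → Fin d → E d → ℂ) (ksq f : E d → ℂ)
    (u : E d → ℂ) : Prop :=
  ∀ᵐ x ∂(volume.restrict Ω),
    -(∑ i, ∑ j, wgrad Ω (fun y => ε i j y * wgrad Ω u j y) i x)
      + ksq x * Complex.sinh (u x) = f x

/-- `u` is a strong solution of the nPBE with source `f` and boundary data (extension) `w`. -/
def IsStrongSolution (Ω : Set (E d)) (ε : Fin d → Fin d → E d → ℂ)
    (ksq f w u : E d → ℂ) : Prop :=
  MemH2 Ω u ∧ MemH10 Ω (fun x => u x - w x) ∧ NPBEStrong Ω ε ksq f u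

/-- `K = L⁻¹` with zero Dirichlet boundary data (a choice of solution; `0` if none exists). -/
def Kop (Ω : Set (E d)) (ε : Fin d → Fin d → E d → ℂ) (ksq : E d → ℂ) (F : E d → ℂ) :
    E d → ℂ :=
  if h : ∃ u : E d → ℂ, MemH2 Ω u ∧ MemH10 Ω u ∧
      ∀ᵐ x ∂(volume.restrict Ω), Lop Ω ε ksq u x = F x
  then h.choose else 0

/-- The iteration operator `A(v) = K(f − N(v) − Lw) + w`. -/
def Aop (Ω : Set (E d)) (ε : Fin d → Fin d → E d → ℂ) (ksq f w : E d → ℂ)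
    (v : E d → ℂ) : E d → ℂ :=
  fun x => Kop Ω ε ksq (fun y => f y - Nop ksq v y - Lop Ω ε ksq w y) x + w x

/-- Inverse hyperbolic cosine `cosh⁻¹`. -/
def acosh (y : ℝ) : ℝ := Real.log (y + Real.sqrt (y ^ 2 - 1))

lemma acosh_eq {x : ℝ} (hx : 0 < x) :
    acosh (1 + 1 / x) = Real.log (1 + x + Real.sqrt (1 + 2 * x)) - Real.log x := by
  have hx' : x ≠ 0 := hx.ne'
  have hs : (0:ℝ) ≤ 1 + 2 * x := by linarith
  have h1 : (1 + 1 / x) ^ 2 - 1 = (1 + 2 * x) / x ^ 2 := by field_simp; ring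
  have h2 : Real.sqrt ((1 + 2 * x) / x ^ 2) = Real.sqrt (1 + 2 * x) / x := by
    rw [Real.sqrt_div hs, Real.sqrt_sq hx.le]
  have h3 : 1 + 1 / x + Real.sqrt (1 + 2 * x) / x
      = (1 + x + Real.sqrt (1 + 2 * x)) / x := by field_simp; ring
  have hnum : 0 < 1 + x + Real.sqrt (1 + 2 * x) := by
    have := Real.sqrt_nonneg (1 + 2 * x); linarith
  rw [acosh, h1, h2, h3, Real.log_div hnum.ne' hx']

lemma key : Tendsto (fun x : ℝ =>
    ((1 + x) * acosh (1 + 1 / x) - Real.sqrt (1 + 2 * x)) /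
      Real.log ((2 / Real.exp 1) / x)) (𝓝[>] (0 : ℝ)) (𝓝 1) := by
  set f : ℝ → ℝ := fun x => (1 + x) * acosh (1 + 1 / x) - Real.sqrt (1 + 2 * x) with hf
  set D : ℝ → ℝ := fun x => Real.log ((2 / Real.exp 1) / x) with hDdef
  have hc : (0:ℝ) < 2 / Real.exp 1 := by positivity
  have hDeq : ∀ x ∈ Ioi (0:ℝ), D x = Real.log 2 - 1 - Real.log x := by
    intro x hx
    simp only [hDdef, Real.log_div hc.ne' (ne_of_gt hx), Real.log_div two_ne_zero
      (Real.exp_ne_zero 1), Real.log_exp]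
  have hD : Tendsto D (𝓝[>] (0:ℝ)) atTop := by
    have h1 : Tendsto (fun x : ℝ => -Real.log x) (𝓝[>] (0:ℝ)) atTop :=
      tendsto_neg_atBot_atTop.comp Real.tendsto_log_nhdsGT_zero
    have h2 : Tendsto (fun x : ℝ => Real.log 2 - 1 - Real.log x) (𝓝[>] (0:ℝ)) atTop := by
      simpa [sub_eq_add_neg] using tendsto_atTop_add_const_left _ (Real.log 2 - 1) h1
    exact h2.congr' (eventually_nhdsWithin_of_forall fun x hx => (hDeq x hx).symm)
  have hdiff : Tendsto (fun x => f x - D x) (𝓝[>] (0:ℝ)) (𝓝 0) := by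
    have heq : ∀ x ∈ Ioi (0:ℝ), f x - D x =
        (1 + x) * Real.log (1 + x + Real.sqrt (1 + 2 * x)) - Real.log x * x
          - Real.sqrt (1 + 2 * x) - Real.log 2 + 1 := by
      intro x hx
      rw [hDeq x hx]; simp only [hf]; rw [acosh_eq hx]; ring
    have h1 : Tendsto (fun x : ℝ => (1 + x) * Real.log (1 + x + Real.sqrt (1 + 2 * x)))
        (𝓝[>] (0:ℝ)) (𝓝 (Real.log 2)) := by
      have hsq : ContinuousAt (fun x : ℝ => 1 + x + Real.sqrt (1 + 2 * x)) 0 := by fun_prop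
      have hlog : ContinuousAt (fun x : ℝ => Real.log (1 + x + Real.sqrt (1 + 2 * x))) 0 :=
        hsq.log (by norm_num [Real.sqrt_one])
      have hct : ContinuousAt
          (fun x : ℝ => (1 + x) * Real.log (1 + x + Real.sqrt (1 + 2 * x))) 0 :=
        (continuousAt_const.add continuousAt_id).mul hlog
      have h0 : (1 + (0:ℝ)) * Real.log (1 + 0 + Real.sqrt (1 + 2 * 0)) = Real.log 2 := by
        norm_num [Real.sqrt_one]
      simpa [Real.sqrt_one, show (1:ℝ)+1 = 2 by norm_num] using hct.continuousWithinAt.tendsto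
    have h2 : Tendsto (fun x : ℝ => Real.log x * x) (𝓝[>] (0:ℝ)) (𝓝 0) := by
      simpa using _root_.tendsto_log_mul_rpow_nhdsGT_zero one_pos
    have h3 : Tendsto (fun x : ℝ => Real.sqrt (1 + 2 * x)) (𝓝[>] (0:ℝ)) (𝓝 1) := by
      have : ContinuousAt (fun x : ℝ => Real.sqrt (1 + 2 * x)) 0 := by fun_prop
      simpa using this.continuousWithinAt.tendsto
    have h := ((((h1.sub h2).sub h3).sub tendsto_const_nhds).add tendsto_const_nhds :
      Tendsto _ (𝓝[>] (0:ℝ)) (𝓝 (Real.log 2 - 0 - 1 - Real.log 2 + 1)))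
    have h' : Real.log 2 - 0 - 1 - Real.log 2 + 1 = 0 := by ring
    rw [h'] at h
    exact h.congr' (eventually_nhdsWithin_of_forall fun x hx => (heq x hx).symm)
  have hratio : Tendsto (fun x => (f x - D x) / D x) (𝓝[>] (0:ℝ)) (𝓝 0) :=
    hdiff.div_atTop hD
  have hne : ∀ᶠ x in 𝓝[>] (0:ℝ), D x ≠ 0 := by
    filter_upwards [hD.eventually_ge_atTop 1] with x hx
    linarith
  have : Tendsto (fun x => (f x - D x) / D x + 1) (𝓝[>] (0:ℝ)) (𝓝 (0 + 1)) :=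
    hratio.add tendsto_const_nhds
  rw [zero_add] at this
  refine this.congr' ?_
  filter_upwards [hne] with x hx
  rw [sub_div, div_self hx]
  ring

/-- asymptotics of the small-data threshold as `‖κ‖_{L^∞} → 0`.  With
`x(t) = C_H C_S t² |Ω|^{1/2}` and
`y₀*(t) = C_S⁻¹[(1 + x(t)) cosh⁻¹(1 + 1/x(t)) − √(1 + 2x(t))]`, there exists a constant
`C > 0` such that `y₀*(t) ∼ C_S⁻¹ ln(C/t²)` as `t → 0⁺`. -/
theorem threshold_asymptotics
    (CH CS V : ℝ) (hCH : 0 < CH) (hCS : 0 < CS) (hV : 0 < V) :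
    ∃ C : ℝ, 0 < C ∧
      Filter.Tendsto
        (fun t : ℝ =>
          (CS⁻¹ * ((1 + CH * CS * t ^ 2 * Real.sqrt V) *
              acosh (1 + 1 / (CH * CS * t ^ 2 * Real.sqrt V)) -
            Real.sqrt (1 + 2 * (CH * CS * t ^ 2 * Real.sqrt V)))) /
          (CS⁻¹ * Real.log (C / t ^ 2)))
        (𝓝[>] (0 : ℝ)) (𝓝 1) := by
  have hsV : 0 < Real.sqrt V := Real.sqrt_pos.2 hV
  set a := CH * CS * Real.sqrt V with ha_def
  have ha : 0 < a := by positivity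
  refine ⟨2 / (a * Real.exp 1), by positivity, ?_⟩
  have hx : Tendsto (fun t : ℝ => a * t ^ 2) (𝓝[>] (0:ℝ)) (𝓝[>] (0:ℝ)) := by
    rw [tendsto_nhdsWithin_iff]
    constructor
    · have h : Tendsto (fun t : ℝ => a * t ^ 2) (𝓝 0) (𝓝 (a * 0 ^ 2)) :=
        ((continuous_const.mul (continuous_pow 2)).tendsto 0)
      simpa using h.mono_left nhdsWithin_le_nhds
    · filter_upwards [self_mem_nhdsWithin] with t ht
      exact mul_pos ha (pow_pos ht 2)
  refine (key.comp hx).congr' ?_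
  filter_upwards [self_mem_nhdsWithin] with t ht
  have ht' : (t:ℝ) ≠ 0 := ne_of_gt ht
  have hX : CH * CS * t ^ 2 * Real.sqrt V = a * t ^ 2 := by rw [ha_def]; ring
  have harg : (2 / (a * Real.exp 1)) / t ^ 2 = (2 / Real.exp 1) / (a * t ^ 2) := by
    field_simp
  simp only [Function.comp_apply]
  rw [hX, harg, mul_div_mul_left _ _ (inv_ne_zero hCS.ne')]

end
end

section
/- Let A > 0, κ̃ > 0, λ ∈ ℝ, ε > 0, c ∈ ℝ, and let y_ε solve the initial value problem (r+ε) y'' + A y' + κ̃²(r+ε) sinh y = (r+ε) λ with y(0) = c, y'(0) = 0. Define the Hamiltonian H(y,w) = w²/2 + κ̃²(cosh y − 1) − λ y. Then along the solution, (d/dr) H(y_ε(r), y_ε'(r)) = −A y_ε'(r)² / (r+ε) ≤ 0 for r ≥ 0; consequently the forward orbit (y_ε(r), y_ε'(r)) stays in the compact sublevel set {(y,w) : H(y,w) ≤ H(c,0)}, and the solution extends uniquely to all of [0,∞) with H(y_ε(r), y_ε'(r)) ≤ H(c,0) for all r ≥ 0. -/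
open MeasureTheory Filter Set
open scoped Topology NNReal ENNReal ComplexConjugate

noncomputable section
attribute [local instance] Classical.propDecidable

variable {d : ℕ}

open Set Metric Filter

noncomputable section ODEAux

namespace ODEAux

/-- The vector field of the regularized system. -/
def odeF (A κt lam eps : ℝ) (r : ℝ) (p : ℝ × ℝ) : ℝ × ℝ :=
  (p.2, -(κt ^ 2) * Real.sinh p.1 - A * p.2 / (r + eps) + lam)

/-- The Hamiltonian as a function on the phase space. -/
def ham (κt lam : ℝ) (p : ℝ × ℝ) : ℝ :=
  p.2 ^ 2 / 2 + κt ^ 2 * (Real.cosh p.1 - 1) - lam * p.1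

lemma sq_le_sinh_sq (t : ℝ) : t ^ 2 ≤ Real.sinh t ^ 2 := by
  rcases le_or_gt 0 t with h | h
  · nlinarith [Real.self_le_sinh_iff.mpr h]
  · have h2 := Real.self_le_sinh_iff.mpr (by linarith : (0:ℝ) ≤ -t)
    rw [Real.sinh_neg] at h2
    nlinarith

lemma half_sq_le_cosh (y : ℝ) : y ^ 2 / 2 ≤ Real.cosh y - 1 := by
  have h1 : Real.cosh y = 2 * Real.sinh (y / 2) ^ 2 + 1 := by
    have h0 := Real.cosh_two_mul (y / 2)
    have h2 := Real.cosh_sq (y / 2)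
    rw [show 2 * (y / 2) = y by ring] at h0
    rw [h0, h2]; ring
  nlinarith [sq_le_sinh_sq (y / 2)]

lemma abs_sinh_le_cosh (y : ℝ) : |Real.sinh y| ≤ Real.cosh y := by
  nlinarith [Real.cosh_sq y, Real.one_le_cosh y, sq_abs (Real.sinh y),
    abs_nonneg (Real.sinh y)]

lemma abs_sub_le'' (a b : ℝ) : |a - b| ≤ |a| + |b| := by
  rw [sub_eq_add_neg]
  exact (abs_add_le a (-b)).trans (by rw [abs_neg])

/-- Initial energy. -/
def ene0 (κt lam c : ℝ) : ℝ := κt ^ 2 * (Real.cosh c - 1) - lam * c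

lemma ham_init (κt lam c : ℝ) : ham κt lam (c, 0) = ene0 κt lam c := by
  simp [ham, ene0]

/-- A priori bound for the first coordinate. -/
def bY (κt lam c : ℝ) : ℝ :=
  Real.sqrt ((4 * ene0 κt lam c * κt ^ 2 + 4 * lam ^ 2) / κt ^ 4)

/-- A priori bound for the norm of the state. -/
def bR (κt lam c : ℝ) : ℝ :=
  max (bY κt lam c) (Real.sqrt (2 * ene0 κt lam c + 2 * |lam| * bY κt lam c))

lemma bR_nonneg (κt lam c : ℝ) : 0 ≤ bR κt lam c :=
  le_trans (Real.sqrt_nonneg _) (le_max_left _ _)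

lemma norm_le_of_ham_le {κt lam c : ℝ} (hκt : 0 < κt) {p : ℝ × ℝ}
    (hp : ham κt lam p ≤ ene0 κt lam c) : ‖p‖ ≤ bR κt lam c := by
  obtain ⟨y, w⟩ := p
  have hham : w ^ 2 / 2 + κt ^ 2 * (Real.cosh y - 1) - lam * y ≤ ene0 κt lam c := hp
  set E0 := ene0 κt lam c with hE0
  have hcosh := half_sq_le_cosh y
  have hly : lam * y ≤ |lam| * |y| := by
    calc lam * y ≤ |lam * y| := le_abs_self _
      _ = |lam| * |y| := abs_mul _ _
  have hamgm : κt ^ 2 * (|lam| * |y|) ≤ κt ^ 4 * y ^ 2 / 4 + lam ^ 2 := by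
    rcases abs_cases y with ⟨h1, _⟩ | ⟨h1, _⟩ <;> rw [h1] <;>
      nlinarith [sq_nonneg (κt ^ 2 * y / 2 - |lam|), sq_nonneg (κt ^ 2 * y / 2 + |lam|),
        sq_abs lam]
  have h2 : κt ^ 2 * (Real.cosh y - 1) ≤ E0 + |lam| * |y| := by nlinarith [sq_nonneg w]
  have h3 : κt ^ 2 * (κt ^ 2 * (y ^ 2 / 2)) ≤ κt ^ 2 * (E0 + |lam| * |y|) := by
    have h4 : κt ^ 2 * (y ^ 2 / 2) ≤ κt ^ 2 * (Real.cosh y - 1) :=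
      mul_le_mul_of_nonneg_left hcosh (sq_nonneg κt)
    exact mul_le_mul_of_nonneg_left (h4.trans h2) (sq_nonneg κt)
  have key : κt ^ 4 * y ^ 2 ≤ 4 * E0 * κt ^ 2 + 4 * lam ^ 2 := by nlinarith [hamgm, h3]
  have hκ4 : (0:ℝ) < κt ^ 4 := by positivity
  have hyB : |y| ≤ bY κt lam c := by
    apply Real.abs_le_sqrt
    rw [le_div_iff₀ hκ4]
    linarith [key]
  have hbY0 : 0 ≤ bY κt lam c := Real.sqrt_nonneg _
  have hw2 : w ^ 2 ≤ 2 * E0 + 2 * |lam| * bY κt lam c := by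
    have hcosh1 : 0 ≤ Real.cosh y - 1 := by linarith [Real.one_le_cosh y]
    have h5 : |lam| * |y| ≤ |lam| * bY κt lam c :=
      mul_le_mul_of_nonneg_left hyB (abs_nonneg lam)
    nlinarith [mul_nonneg (sq_nonneg κt) hcosh1]
  have hwB : |w| ≤ Real.sqrt (2 * E0 + 2 * |lam| * bY κt lam c) := Real.abs_le_sqrt hw2
  have : ‖((y, w) : ℝ × ℝ)‖ = max |y| |w| := by
    rw [Prod.norm_def, Real.norm_eq_abs, Real.norm_eq_abs]
  rw [this]
  exact max_le_max hyB hwB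

lemma hasDerivWithinAt_fst {Z : ℝ → ℝ × ℝ} {v : ℝ × ℝ} {s : Set ℝ} {r : ℝ}
    (h : HasDerivWithinAt Z v s r) : HasDerivWithinAt (fun t => (Z t).1) v.1 s r := by
  have := (ContinuousLinearMap.fst ℝ ℝ ℝ).hasFDerivAt.comp_hasDerivWithinAt r h
  exact this

lemma hasDerivWithinAt_snd {Z : ℝ → ℝ × ℝ} {v : ℝ × ℝ} {s : Set ℝ} {r : ℝ}
    (h : HasDerivWithinAt Z v s r) : HasDerivWithinAt (fun t => (Z t).2) v.2 s r := by
  have := (ContinuousLinearMap.snd ℝ ℝ ℝ).hasFDerivAt.comp_hasDerivWithinAt r h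
  exact this

lemma hamDeriv {A κt lam eps : ℝ} (heps : 0 < eps) {s : Set ℝ} {Z : ℝ → ℝ × ℝ} {r : ℝ}
    (hr : 0 ≤ r) (hZ : HasDerivWithinAt Z (odeF A κt lam eps r (Z r)) s r) :
    HasDerivWithinAt (fun t => ham κt lam (Z t)) (-A * (Z r).2 ^ 2 / (r + eps)) s r := by
  have hre : r + eps ≠ 0 := by positivity
  have hy : HasDerivWithinAt (fun t => (Z t).1) ((Z r).2) s r := hasDerivWithinAt_fst hZ
  have hw : HasDerivWithinAt (fun t => (Z t).2)
      (-(κt ^ 2) * Real.sinh (Z r).1 - A * (Z r).2 / (r + eps) + lam) s r :=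
    hasDerivWithinAt_snd hZ
  have h1 := (hw.pow 2).div_const 2
  have h2 : HasDerivWithinAt (fun t => Real.cosh (Z t).1) (Real.sinh (Z r).1 * (Z r).2) s r :=
    hy.cosh
  have h3 := (h1.add (((h2.sub_const 1).const_mul (κt ^ 2)))).sub (hy.const_mul lam)
  have he : (fun t => ham κt lam (Z t)) =
      fun t => (Z t).2 ^ 2 / 2 + κt ^ 2 * (Real.cosh (Z t).1 - 1) - lam * (Z t).1 := rfl
  rw [he]
  refine h3.congr_deriv ?_
  norm_num
  field_simp
  ring

lemma ham_mono {A κt lam eps : ℝ} (hA : 0 < A) (heps : 0 < eps) {s : Set ℝ} (hconv : Convex ℝ s)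
    (hs : s ⊆ Ici (0:ℝ)) (h0 : (0:ℝ) ∈ s) {Z : ℝ → ℝ × ℝ}
    (hZ : ∀ r ∈ s, HasDerivWithinAt Z (odeF A κt lam eps r (Z r)) s r) :
    ∀ r ∈ s, ham κt lam (Z r) ≤ ham κt lam (Z 0) := by
  have hcont : ContinuousOn (fun t => ham κt lam (Z t)) s := fun r hr =>
    (hamDeriv heps (hs hr) (hZ r hr)).continuousWithinAt
  have hanti : AntitoneOn (fun t => ham κt lam (Z t)) s := by
    apply antitoneOn_of_deriv_nonpos hconv hcont
    · intro x hx
      have hmem : s ∈ nhds x := mem_interior_iff_mem_nhds.mp hx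
      exact ((hamDeriv heps (hs (interior_subset hx)) (hZ x (interior_subset hx))).hasDerivAt
        hmem).differentiableAt.differentiableWithinAt
    · intro x hx
      have hx' : x ∈ s := interior_subset hx
      have hmem : s ∈ nhds x := mem_interior_iff_mem_nhds.mp hx
      rw [((hamDeriv heps (hs hx') (hZ x hx')).hasDerivAt hmem).deriv]
      have hx0 : (0:ℝ) ≤ x := hs hx'
      apply div_nonpos_of_nonpos_of_nonneg
      · nlinarith [mul_nonneg hA.le (sq_nonneg (Z x).2)]
      · linarith
  exact fun r hr => hanti h0 hr (hs hr)

lemma odeF_lipschitz {A κt lam eps : ℝ} (hA : 0 < A) (heps : 0 < eps) {R t : ℝ}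
    (hR : 0 ≤ R) (ht : 0 ≤ t) :
    LipschitzOnWith (Real.toNNReal (1 + κt ^ 2 * Real.cosh R + A / eps))
      (odeF A κt lam eps t) (closedBall (0 : ℝ × ℝ) R) := by
  have hKnn : (0:ℝ) ≤ 1 + κt ^ 2 * Real.cosh R + A / eps := by positivity
  have hte : (0:ℝ) < t + eps := by linarith
  apply LipschitzOnWith.of_dist_le_mul
  intro p hp q hq
  rw [Real.coe_toNNReal _ hKnn]
  have hK1 : (1:ℝ) ≤ 1 + κt ^ 2 * Real.cosh R + A / eps := by
    have h1 : (0:ℝ) ≤ κt ^ 2 * Real.cosh R := by positivity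
    have h2 : (0:ℝ) ≤ A / eps := by positivity
    linarith
  have hp1 : |p.1| ≤ R := by
    rw [mem_closedBall_zero_iff] at hp
    calc |p.1| = ‖p.1‖ := (Real.norm_eq_abs _).symm
      _ ≤ ‖p‖ := norm_fst_le p
      _ ≤ R := hp
  have hq1 : |q.1| ≤ R := by
    rw [mem_closedBall_zero_iff] at hq
    calc |q.1| = ‖q.1‖ := (Real.norm_eq_abs _).symm
      _ ≤ ‖q‖ := norm_fst_le q
      _ ≤ R := hq
  have hsinh : |Real.sinh p.1 - Real.sinh q.1| ≤ Real.cosh R * |p.1 - q.1| := by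
    have hf : ∀ x ∈ Icc (-R) R, HasDerivWithinAt Real.sinh (Real.cosh x) (Icc (-R) R) x :=
      fun x _ => (Real.hasDerivAt_sinh x).hasDerivWithinAt
    have hbound : ∀ x ∈ Icc (-R) R, ‖Real.cosh x‖ ≤ Real.cosh R := by
      intro x hx
      rw [Real.norm_eq_abs, abs_of_pos (Real.cosh_pos _)]
      apply Real.cosh_le_cosh.mpr
      rw [abs_of_nonneg hR]
      exact abs_le.mpr ⟨hx.1, hx.2⟩
    have := Convex.norm_image_sub_le_of_norm_hasDerivWithin_le hf hbound (convex_Icc _ _)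
      (abs_le.mp hq1) (abs_le.mp hp1)
    simpa [Real.norm_eq_abs] using this
  have hAt : A / (t + eps) ≤ A / eps := by
    apply div_le_div_of_nonneg_left hA.le heps
    linarith
  have hd1 : |p.1 - q.1| ≤ dist p q := by
    rw [← Real.dist_eq]
    rw [Prod.dist_eq]
    exact le_max_left _ _
  have hd2 : |p.2 - q.2| ≤ dist p q := by
    rw [← Real.dist_eq]
    rw [Prod.dist_eq]
    exact le_max_right _ _
  rw [Prod.dist_eq]
  apply max_le
  · have : dist (odeF A κt lam eps t p).1 (odeF A κt lam eps t q).1 = |p.2 - q.2| := by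
      simp [odeF, Real.dist_eq]
    rw [this]
    calc |p.2 - q.2| ≤ dist p q := hd2
      _ ≤ (1 + κt ^ 2 * Real.cosh R + A / eps) * dist p q :=
        le_mul_of_one_le_left dist_nonneg hK1
  · rw [Real.dist_eq]
    have hexp : (odeF A κt lam eps t p).2 - (odeF A κt lam eps t q).2 =
        -(κt ^ 2) * (Real.sinh p.1 - Real.sinh q.1) - (A / (t + eps)) * (p.2 - q.2) := by
      simp only [odeF]
      field_simp
      ring
    have hDpos : (0:ℝ) ≤ A / (t + eps) := by positivity
    calc |(odeF A κt lam eps t p).2 - (odeF A κt lam eps t q).2|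
        ≤ |(-(κt ^ 2)) * (Real.sinh p.1 - Real.sinh q.1)|
            + |(A / (t + eps)) * (p.2 - q.2)| := by
          rw [hexp]; exact abs_sub_le'' _ _
      _ = κt ^ 2 * |Real.sinh p.1 - Real.sinh q.1| + (A / (t + eps)) * |p.2 - q.2| := by
          rw [abs_mul, abs_mul, abs_neg, abs_of_nonneg (sq_nonneg κt), abs_of_nonneg hDpos]
      _ ≤ κt ^ 2 * (Real.cosh R * dist p q) + (A / eps) * dist p q := by
          have e1 : |Real.sinh p.1 - Real.sinh q.1| ≤ Real.cosh R * dist p q :=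
            hsinh.trans (mul_le_mul_of_nonneg_left hd1 (Real.cosh_pos _).le)
          have e2 : (A / (t + eps)) * |p.2 - q.2| ≤ (A / eps) * dist p q :=
            mul_le_mul hAt hd2 (abs_nonneg _) (by positivity)
          have e3 : κt ^ 2 * |Real.sinh p.1 - Real.sinh q.1|
              ≤ κt ^ 2 * (Real.cosh R * dist p q) := mul_le_mul_of_nonneg_left e1 (sq_nonneg κt)
          linarith
      _ ≤ (1 + κt ^ 2 * Real.cosh R + A / eps) * dist p q := by
          nlinarith [dist_nonneg (x := p) (y := q)]

lemma odeF_norm_le {A κt lam eps : ℝ} (hA : 0 < A) (heps : 0 < eps) {R t : ℝ}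
    (hR : 0 ≤ R) (ht : 0 ≤ t) {p : ℝ × ℝ} (hp : ‖p‖ ≤ R) :
    ‖odeF A κt lam eps t p‖ ≤ R + κt ^ 2 * Real.cosh R + A * R / eps + |lam| := by
  have hte : (0:ℝ) < t + eps := by linarith
  have hp1 : |p.1| ≤ R := by
    calc |p.1| = ‖p.1‖ := (Real.norm_eq_abs _).symm
      _ ≤ ‖p‖ := norm_fst_le p
      _ ≤ R := hp
  have hp2 : |p.2| ≤ R := by
    calc |p.2| = ‖p.2‖ := (Real.norm_eq_abs _).symm
      _ ≤ ‖p‖ := norm_snd_le p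
      _ ≤ R := hp
  have hcosh : (0:ℝ) ≤ κt ^ 2 * Real.cosh R := by positivity
  have hAR : (0:ℝ) ≤ A * R / eps := by positivity
  rw [Prod.norm_def]
  apply max_le
  · rw [Real.norm_eq_abs]
    show |p.2| ≤ _
    linarith [abs_nonneg lam]
  · rw [Real.norm_eq_abs]
    show |(-(κt ^ 2) * Real.sinh p.1 - A * p.2 / (t + eps) + lam)| ≤ _
    have h1 : |(-(κt ^ 2) * Real.sinh p.1 - A * p.2 / (t + eps) + lam)|
        ≤ |(-(κt ^ 2) * Real.sinh p.1)| + |A * p.2 / (t + eps)| + |lam| := by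
      calc |(-(κt ^ 2) * Real.sinh p.1 - A * p.2 / (t + eps) + lam)|
          ≤ |(-(κt ^ 2) * Real.sinh p.1 - A * p.2 / (t + eps))| + |lam| := abs_add_le _ _
        _ ≤ |(-(κt ^ 2) * Real.sinh p.1)| + |A * p.2 / (t + eps)| + |lam| := by
            linarith [abs_sub_le'' (-(κt ^ 2) * Real.sinh p.1) (A * p.2 / (t + eps))]
    have h2 : |(-(κt ^ 2) * Real.sinh p.1)| ≤ κt ^ 2 * Real.cosh R := by
      rw [abs_mul, abs_neg, abs_of_nonneg (sq_nonneg κt)]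
      apply mul_le_mul_of_nonneg_left _ (sq_nonneg κt)
      calc |Real.sinh p.1| ≤ Real.cosh p.1 := abs_sinh_le_cosh _
        _ ≤ Real.cosh R := by
            apply Real.cosh_le_cosh.mpr
            rw [abs_of_nonneg hR]
            exact hp1

    have h3 : |A * p.2 / (t + eps)| ≤ A * R / eps := by
      rw [abs_div, abs_mul, abs_of_pos hA, abs_of_pos hte]
      apply div_le_div₀ (by positivity) (mul_le_mul_of_nonneg_left hp2 hA.le) heps
      linarith
    linarith

/-- The uniform bound constant for the Picard–Lindelöf step. -/
def plC (A κt lam eps R0 : ℝ) : ℝ :=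
  (R0 + 1) + κt ^ 2 * Real.cosh (R0 + 1) + A * (R0 + 1) / eps + |lam|

/-- The uniform step size for the Picard–Lindelöf iteration. -/
def plδ (A κt lam eps R0 : ℝ) : ℝ := 1 / (plC A κt lam eps R0 + 1)

lemma plC_pos {A κt lam eps R0 : ℝ} (hA : 0 < A) (heps : 0 < eps) (hR0 : 0 ≤ R0) :
    0 < plC A κt lam eps R0 := by
  have h1 : (0:ℝ) ≤ κt ^ 2 * Real.cosh (R0 + 1) := by positivity
  have h2 : (0:ℝ) ≤ A * (R0 + 1) / eps :=
    div_nonneg (mul_nonneg hA.le (by linarith)) heps.le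
  have h3 := abs_nonneg lam
  unfold plC
  linarith

lemma plδ_pos {A κt lam eps R0 : ℝ} (hA : 0 < A) (heps : 0 < eps) (hR0 : 0 ≤ R0) :
    0 < plδ A κt lam eps R0 := by
  have := plC_pos (lam := lam) (κt := κt) hA heps hR0
  unfold plδ
  positivity

lemma pl_step {A κt lam eps R0 : ℝ} (hA : 0 < A) (heps : 0 < eps) (hR0 : 0 ≤ R0)
    {t₀ : ℝ} (ht₀ : 0 ≤ t₀) {x₀ : ℝ × ℝ} (hx₀ : ‖x₀‖ ≤ R0) :
    ∃ z : ℝ → ℝ × ℝ, z t₀ = x₀ ∧ ∀ t ∈ Icc t₀ (t₀ + plδ A κt lam eps R0),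
      HasDerivWithinAt z (odeF A κt lam eps t (z t))
        (Icc t₀ (t₀ + plδ A κt lam eps R0)) t := by
  have hCpos := plC_pos (lam := lam) (κt := κt) hA heps hR0
  have hδpos := plδ_pos (lam := lam) (κt := κt) hA heps hR0
  set δ := plδ A κt lam eps R0 with hδdef
  have hpl : IsPicardLindelof (odeF A κt lam eps) (tmin := t₀) (tmax := t₀ + δ)
      ⟨t₀, le_refl _, by linarith⟩ x₀ 1 0 (Real.toNNReal (plC A κt lam eps R0))
      (Real.toNNReal (1 + κt ^ 2 * Real.cosh (R0 + 1) + A / eps)) := by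
    refine ⟨?_, ?_, ?_, ?_⟩
    · intro t ht
      have hsub : closedBall x₀ 1 ⊆ closedBall (0 : ℝ × ℝ) (R0 + 1) := by
        apply closedBall_subset_closedBall'
        rw [dist_zero_right]
        linarith
      exact (odeF_lipschitz hA heps (by linarith) (le_trans ht₀ ht.1)).mono hsub
    · intro x _
      have hne : ∀ t ∈ Icc t₀ (t₀ + δ), t + eps ≠ 0 := by
        intro t ht
        have h6 : 0 ≤ t := le_trans ht₀ ht.1
        positivity
      exact continuousOn_const.prodMk (((continuousOn_const.sub (continuousOn_const.div
        ((continuous_id.add continuous_const).continuousOn) hne)).add continuousOn_const))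
    · intro t ht x hx
      have hx' : ‖x‖ ≤ R0 + 1 := by
        rw [mem_closedBall_iff_norm, NNReal.coe_one] at hx
        have := norm_sub_norm_le x x₀
        linarith
      exact (odeF_norm_le hA heps (by linarith) (le_trans ht₀ ht.1) hx').trans
        (Real.le_coe_toNNReal _)
    · show (Real.toNNReal (plC A κt lam eps R0) : ℝ) * max (t₀ + δ - t₀) (t₀ - t₀)
          ≤ ((1:ℝ≥0):ℝ) - ((0:ℝ≥0):ℝ)
      rw [Real.coe_toNNReal _ hCpos.le, NNReal.coe_one, NNReal.coe_zero, sub_zero]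
      have he1 : t₀ + δ - t₀ = δ := by ring
      rw [he1, sub_self, max_eq_left hδpos.le, hδdef]
      unfold plδ
      rw [mul_one_div, div_le_one (by linarith)]
      linarith
  obtain ⟨z, hz0, hzd⟩ := hpl.exists_eq_forall_mem_Icc_hasDerivWithinAt₀
  exact ⟨z, hz0, hzd⟩

lemma glue_sol {A κt lam eps : ℝ} {a b C : ℝ} (hab : a ≤ b) (hbC : b ≤ C)
    {Z z : ℝ → ℝ × ℝ}
    (hZ : ∀ t ∈ Icc a b, HasDerivWithinAt Z (odeF A κt lam eps t (Z t)) (Icc a b) t)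
    (hz : ∀ t ∈ Icc b C, HasDerivWithinAt z (odeF A κt lam eps t (z t)) (Icc b C) t)
    (hm : Z b = z b) :
    ∃ Y : ℝ → ℝ × ℝ, (∀ t, t ≤ b → Y t = Z t) ∧
      ∀ t ∈ Icc a C, HasDerivWithinAt Y (odeF A κt lam eps t (Y t)) (Icc a C) t := by
  classical
  set Y : ℝ → ℝ × ℝ := fun t => if t ≤ b then Z t else z t with hYdef
  have hYZ : ∀ t, t ≤ b → Y t = Z t := fun t ht => if_pos ht
  have hYz : ∀ t ∈ Icc b C, Y t = z t := by
    intro u hu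
    rcases lt_or_eq_of_le hu.1 with h | h
    · exact if_neg (not_le.mpr h)
    · rw [show Y u = Z u from if_pos h.ge, ← h, hm]
  refine ⟨Y, hYZ, ?_⟩
  intro t ht
  have hIcc : Icc a C = Icc a b ∪ Icc b C := (Icc_union_Icc_eq_Icc hab hbC).symm
  rcases lt_trichotomy t b with hlt | heq | hgt
  · have htb : t ∈ Icc a b := ⟨ht.1, hlt.le⟩
    have h2 : HasDerivWithinAt Y (odeF A κt lam eps t (Y t)) (Icc a b) t := by
      rw [hYZ t hlt.le]
      exact (hZ t htb).congr (fun u hu => hYZ u hu.2) (hYZ t hlt.le)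
    apply h2.mono_of_mem_nhdsWithin
    apply mem_of_superset (inter_mem_nhdsWithin (Icc a C) (Iic_mem_nhds hlt))
    exact fun u hu => ⟨hu.1.1, hu.2⟩
  · subst heq
    have h1 : HasDerivWithinAt Y (odeF A κt lam eps t (Y t)) (Icc a t) t := by
      rw [hYZ t le_rfl]
      exact (hZ t ⟨hab, le_rfl⟩).congr (fun u hu => hYZ u hu.2) (hYZ t le_rfl)
    have h2 : HasDerivWithinAt Y (odeF A κt lam eps t (Y t)) (Icc t C) t := by
      rw [hYZ t le_rfl, hm]
      exact (hz t ⟨le_rfl, hbC⟩).congr (fun u hu => hYz u hu) (hYz t ⟨le_rfl, hbC⟩)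
    rw [hIcc]
    exact h1.union h2
  · have htb : t ∈ Icc b C := ⟨hgt.le, ht.2⟩
    have h2 : HasDerivWithinAt Y (odeF A κt lam eps t (Y t)) (Icc b C) t := by
      rw [hYz t htb]
      exact (hz t htb).congr (fun u hu => hYz u hu) (hYz t htb)
    apply h2.mono_of_mem_nhdsWithin
    apply mem_of_superset (inter_mem_nhdsWithin (Icc a C) (Ici_mem_nhds hgt))
    exact fun u hu => ⟨hu.2, hu.1.2⟩

lemma exists_sol {A κt lam eps c : ℝ} (hA : 0 < A) (hκt : 0 < κt) (heps : 0 < eps) :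
    ∀ n : ℕ, ∃ Z : ℝ → ℝ × ℝ, Z 0 = (c, 0) ∧
      ∀ t ∈ Icc (0:ℝ) (plδ A κt lam eps (bR κt lam c) + n * plδ A κt lam eps (bR κt lam c)),
        HasDerivWithinAt Z (odeF A κt lam eps t (Z t))
          (Icc (0:ℝ) (plδ A κt lam eps (bR κt lam c) + n * plδ A κt lam eps (bR κt lam c))) t := by
  have hR0 : 0 ≤ bR κt lam c := bR_nonneg κt lam c
  have hδpos := plδ_pos (lam := lam) (κt := κt) (R0 := bR κt lam c) hA heps hR0
  set δ := plδ A κt lam eps (bR κt lam c) with hδdef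
  have hinit : ‖((c, 0) : ℝ × ℝ)‖ ≤ bR κt lam c :=
    norm_le_of_ham_le hκt (le_of_eq (ham_init κt lam c))
  intro n
  induction n with
  | zero =>
    obtain ⟨z, hz0, hzd⟩ := pl_step (lam := lam) (κt := κt) hA heps hR0 le_rfl hinit
    refine ⟨z, hz0, ?_⟩
    simpa using hzd
  | succ n ih =>
    obtain ⟨Z, hZ0, hZd⟩ := ih
    set b := δ + n * δ with hbdef
    have hb0 : 0 ≤ b := by positivity
    have hbb : (0:ℝ) ≤ b := hb0
    -- a priori bound at the right endpoint
    have hham : ham κt lam (Z b) ≤ ene0 κt lam c := by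
      have := ham_mono hA heps (convex_Icc (0:ℝ) b) (fun x hx => hx.1)
        ⟨le_rfl, hb0⟩ hZd b ⟨hb0, le_rfl⟩
      rwa [hZ0, ham_init] at this
    have hZb : ‖Z b‖ ≤ bR κt lam c := norm_le_of_ham_le hκt hham
    obtain ⟨z, hz0, hzd⟩ := pl_step (lam := lam) (κt := κt) hA heps hR0 hb0 hZb
    obtain ⟨Y, hYZ, hYd⟩ := glue_sol (by linarith : (0:ℝ) ≤ b)
      (by linarith : b ≤ b + δ) hZd hzd hz0.symm
    refine ⟨Y, by rw [hYZ 0 hb0, hZ0], ?_⟩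
    have hend : δ + (n + 1 : ℕ) * δ = b + δ := by push_cast; ring
    rw [hend]
    exact hYd

lemma uniq_sol {A κt lam eps R0 b : ℝ} (hA : 0 < A) (heps : 0 < eps) (hR0 : 0 ≤ R0)
    {Z₁ Z₂ : ℝ → ℝ × ℝ}
    (hc₁ : ContinuousOn Z₁ (Icc 0 b)) (hc₂ : ContinuousOn Z₂ (Icc 0 b))
    (hd₁ : ∀ t ∈ Ico (0:ℝ) b, HasDerivWithinAt Z₁ (odeF A κt lam eps t (Z₁ t)) (Ici t) t)
    (hd₂ : ∀ t ∈ Ico (0:ℝ) b, HasDerivWithinAt Z₂ (odeF A κt lam eps t (Z₂ t)) (Ici t) t)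
    (hm₁ : ∀ t ∈ Ico (0:ℝ) b, ‖Z₁ t‖ ≤ R0) (hm₂ : ∀ t ∈ Ico (0:ℝ) b, ‖Z₂ t‖ ≤ R0)
    (h0 : Z₁ 0 = Z₂ 0) : EqOn Z₁ Z₂ (Icc 0 b) := by
  classical
  set sets : ℝ → Set (ℝ × ℝ) := fun t => if 0 ≤ t then closedBall (0 : ℝ × ℝ) R0 else ∅
    with hsets
  have hv : ∀ t, LipschitzOnWith (Real.toNNReal (1 + κt ^ 2 * Real.cosh R0 + A / eps))
      (odeF A κt lam eps t) (sets t) := by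
    intro t
    by_cases ht : 0 ≤ t
    · rw [hsets]; simp only [if_pos ht]
      exact odeF_lipschitz hA heps hR0 ht
    · rw [hsets]; simp only [if_neg ht]
      exact lipschitzOnWith_empty _ _
  have hs₁ : ∀ t ∈ Ico (0:ℝ) b, Z₁ t ∈ sets t := by
    intro t ht
    rw [hsets]; simp only [if_pos ht.1]
    exact mem_closedBall_zero_iff.mpr (hm₁ t ht)
  have hs₂ : ∀ t ∈ Ico (0:ℝ) b, Z₂ t ∈ sets t := by
    intro t ht
    rw [hsets]; simp only [if_pos ht.1]
    exact mem_closedBall_zero_iff.mpr (hm₂ t ht)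
  exact ODE_solution_unique_of_mem_Icc_right (fun t _ => hv t) hc₁ hd₁ hs₁ hc₂ hd₂ hs₂ h0

lemma global_sol {A κt lam eps c : ℝ} (hA : 0 < A) (hκt : 0 < κt) (heps : 0 < eps) :
    ∃ Z : ℝ → ℝ × ℝ, Z 0 = (c, 0) ∧
      (∀ r ∈ Ici (0:ℝ), HasDerivWithinAt Z (odeF A κt lam eps r (Z r)) (Ici 0) r) ∧
      (∀ r ∈ Ici (0:ℝ), ham κt lam (Z r) ≤ ene0 κt lam c) ∧
      (∀ Z' : ℝ → ℝ × ℝ, Z' 0 = (c, 0) →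
        (∀ r ∈ Ici (0:ℝ), HasDerivWithinAt Z' (odeF A κt lam eps r (Z' r)) (Ici 0) r) →
        ∀ r ∈ Ici (0:ℝ), Z' r = Z r) := by
  classical
  have hR0 : 0 ≤ bR κt lam c := bR_nonneg κt lam c
  have hδpos := plδ_pos (lam := lam) (κt := κt) (R0 := bR κt lam c) hA heps hR0
  set δ := plδ A κt lam eps (bR κt lam c) with hδdef
  choose S hS0 hSd using exists_sol (lam := lam) (c := c) hA hκt heps
  set e : ℕ → ℝ := fun n => δ + n * δ with hedef
  have he0 : ∀ n : ℕ, 0 < e n := by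
    intro n
    have : (0:ℝ) ≤ n * δ := by positivity
    simp only [hedef]
    linarith
  -- energy bound along each local solution
  have hSball : ∀ n : ℕ, ∀ t ∈ Icc (0:ℝ) (e n), ‖S n t‖ ≤ bR κt lam c := by
    intro n t ht
    have h := ham_mono hA heps (convex_Icc (0:ℝ) (e n)) (fun x hx => hx.1)
      ⟨le_rfl, (he0 n).le⟩ (hSd n) t ht
    rw [hS0 n, ham_init] at h
    exact norm_le_of_ham_le hκt h
  have hder : ∀ n : ℕ, ∀ u ∈ Ico (0:ℝ) (e n),
      HasDerivWithinAt (S n) (odeF A κt lam eps u (S n u)) (Ici u) u := by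
    intro n u hu
    exact (hSd n u ⟨hu.1, hu.2.le⟩).mono_of_mem_nhdsWithin (Icc_mem_nhdsGE_of_mem hu)
  have hcont : ∀ n : ℕ, ContinuousOn (S n) (Icc (0:ℝ) (e n)) := fun n u hu =>
    (hSd n u hu).continuousWithinAt
  -- agreement of the local solutions
  have hagree : ∀ m n : ℕ, ∀ t, t ∈ Icc (0:ℝ) (e m) → t ∈ Icc (0:ℝ) (e n) →
      S m t = S n t := by
    intro m n t htm htn
    set b := min (e m) (e n) with hbdef
    have hsub1 : Icc (0:ℝ) b ⊆ Icc 0 (e m) := Icc_subset_Icc le_rfl (min_le_left _ _)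
    have hsub2 : Icc (0:ℝ) b ⊆ Icc 0 (e n) := Icc_subset_Icc le_rfl (min_le_right _ _)
    have := uniq_sol (b := b) hA heps hR0
      ((hcont m).mono hsub1) ((hcont n).mono hsub2)
      (fun u hu => hder m u ⟨hu.1, lt_of_lt_of_le hu.2 (min_le_left _ _)⟩)
      (fun u hu => hder n u ⟨hu.1, lt_of_lt_of_le hu.2 (min_le_right _ _)⟩)
      (fun u hu => hSball m u ⟨hu.1, (hu.2.le.trans (min_le_left _ _))⟩)
      (fun u hu => hSball n u ⟨hu.1, (hu.2.le.trans (min_le_right _ _))⟩)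
      (by rw [hS0 m, hS0 n])
    exact this ⟨htm.1, le_min htm.2 htn.2⟩
  -- the global solution
  set Z : ℝ → ℝ × ℝ := fun t => S (Nat.ceil (t / δ)) t with hZdef
  have hcover : ∀ t : ℝ, 0 ≤ t → t ∈ Icc (0:ℝ) (e (Nat.ceil (t / δ))) := by
    intro t ht
    have h1 : t / δ ≤ (Nat.ceil (t / δ) : ℝ) := Nat.le_ceil _
    have h2 : t ≤ (Nat.ceil (t / δ) : ℝ) * δ := by
      rw [← div_le_iff₀ hδpos]; exact h1
    exact ⟨ht, by simp only [hedef]; linarith⟩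
  have hZeq : ∀ n : ℕ, ∀ t ∈ Icc (0:ℝ) (e n), Z t = S n t := by
    intro n t ht
    exact hagree _ n t (hcover t ht.1) ht
  have hZ0 : Z 0 = (c, 0) := by
    rw [hZeq 0 0 ⟨le_rfl, (he0 0).le⟩, hS0 0]
  have hZd : ∀ r ∈ Ici (0:ℝ), HasDerivWithinAt Z (odeF A κt lam eps r (Z r)) (Ici 0) r := by
    intro r hr
    set n := Nat.ceil (r / δ) with hn
    have hrn : r < e n := by
      have h2 : r ≤ (n : ℝ) * δ := by
        rw [← div_le_iff₀ hδpos]; exact Nat.le_ceil _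
      simp only [hedef]; linarith
    have hmem : Icc (0:ℝ) (e n) ∈ nhdsWithin r (Ici (0:ℝ)) := by
      apply mem_of_superset (inter_mem_nhdsWithin (Ici (0:ℝ)) (Iic_mem_nhds hrn))
      exact fun u hu => ⟨hu.1, hu.2⟩
    have hd := (hSd n r ⟨hr, hrn.le⟩).mono_of_mem_nhdsWithin hmem
    have heq : Z r = S n r := rfl
    rw [heq]
    exact hd.congr_of_eventuallyEq
      (Filter.eventuallyEq_of_mem hmem (fun u hu => hZeq n u hu)) heq
  have hZham : ∀ r ∈ Ici (0:ℝ), ham κt lam (Z r) ≤ ene0 κt lam c := by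
    intro r hr
    have := ham_mono hA heps (convex_Ici (0:ℝ)) (fun x hx => hx) self_mem_Ici hZd r hr
    rwa [hZ0, ham_init] at this
  refine ⟨Z, hZ0, hZd, hZham, ?_⟩
  intro Z' hZ'0 hZ'd r hr
  have hZ'ham : ∀ t ∈ Ici (0:ℝ), ham κt lam (Z' t) ≤ ene0 κt lam c := by
    intro t ht
    have := ham_mono hA heps (convex_Ici (0:ℝ)) (fun x hx => hx) self_mem_Ici hZ'd t ht
    rwa [hZ'0, ham_init] at this
  have hsub : Icc (0:ℝ) r ⊆ Ici (0:ℝ) := fun x hx => hx.1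
  have := uniq_sol (b := r) hA heps hR0
    (fun u hu => ((hZ'd u hu.1).continuousWithinAt).mono hsub)
    (fun u hu => ((hZd u hu.1).continuousWithinAt).mono hsub)
    (fun u hu => (hZ'd u hu.1).mono (Ici_subset_Ici.mpr hu.1))
    (fun u hu => (hZd u hu.1).mono (Ici_subset_Ici.mpr hu.1))
    (fun u hu => norm_le_of_ham_le hκt (hZ'ham u hu.1))
    (fun u hu => norm_le_of_ham_le hκt (hZham u hu.1))
    (by rw [hZ'0, hZ0])
  exact this ⟨hr, le_rfl⟩

end ODEAux
end ODEAux

open ODEAux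

/-- energy decay and global extension for the regularized ODE.  Let
`A > 0`, `κ̃ > 0`, `λ ∈ ℝ`, `ε > 0`, `c ∈ ℝ`, and let `(y, w)` solve, on `[0,T)`, the system
`y' = w`, `w' = −κ̃² sinh y − Aw/(r+ε) + λ` with `y(0) = c`, `w(0) = 0`.  With
`H(y,w) = w²/2 + κ̃²(cosh y − 1) − λy`, one has `(d/dr) H(y(r), w(r)) = −A w(r)²/(r+ε) ≤ 0`
and `H(y(r), w(r)) ≤ H(c,0)` on `[0,T)`; moreover the solution extends (uniquely) to a
global solution on `[0,∞)` along which `H ≤ H(c,0)`. -/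



theorem regularized_hamiltonian_decay_global
    (A κt lam eps c : ℝ) (hA : 0 < A) (hκt : 0 < κt) (heps : 0 < eps)
    (H : ℝ → ℝ → ℝ)
    (hH : H = fun y w => w ^ 2 / 2 + κt ^ 2 * (Real.cosh y - 1) - lam * y)
    (T : ℝ) (hT : 0 < T) (y w : ℝ → ℝ)
    (hy : ∀ r ∈ Set.Ico (0 : ℝ) T, HasDerivWithinAt y (w r) (Set.Ico 0 T) r)
    (hw : ∀ r ∈ Set.Ico (0 : ℝ) T,
      HasDerivWithinAt w (-(κt ^ 2) * Real.sinh (y r) - A * w r / (r + eps) + lam)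
        (Set.Ico 0 T) r)
    (hy0 : y 0 = c) (hw0 : w 0 = 0) :
    -- (1) decay of the Hamiltonian along the local solution
    (∀ r ∈ Set.Ico (0 : ℝ) T,
      HasDerivWithinAt (fun t => H (y t) (w t)) (-A * (w r) ^ 2 / (r + eps))
          (Set.Ico 0 T) r ∧
      -A * (w r) ^ 2 / (r + eps) ≤ 0 ∧
      H (y r) (w r) ≤ H c 0) ∧
    -- (2) unique global extension with the same energy bound
    (∃ Y W : ℝ → ℝ,
      (∀ r ∈ Set.Ici (0 : ℝ), HasDerivWithinAt Y (W r) (Set.Ici 0) r ∧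
        HasDerivWithinAt W (-(κt ^ 2) * Real.sinh (Y r) - A * W r / (r + eps) + lam)
          (Set.Ici 0) r) ∧
      Y 0 = c ∧ W 0 = 0 ∧
      (∀ r ∈ Set.Ico (0 : ℝ) T, Y r = y r ∧ W r = w r) ∧
      (∀ r ∈ Set.Ici (0 : ℝ), H (Y r) (W r) ≤ H c 0) ∧
      ∀ Y' W' : ℝ → ℝ,
        (∀ r ∈ Set.Ici (0 : ℝ), HasDerivWithinAt Y' (W' r) (Set.Ici 0) r ∧
          HasDerivWithinAt W' (-(κt ^ 2) * Real.sinh (Y' r) - A * W' r / (r + eps) + lam)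
            (Set.Ici 0) r) →
        Y' 0 = c → W' 0 = 0 →
        ∀ r ∈ Set.Ici (0 : ℝ), Y' r = Y r ∧ W' r = W r) := by
  subst hH
  have hZloc : ∀ t ∈ Set.Ico (0:ℝ) T, HasDerivWithinAt (fun u => (y u, w u))
      (odeF A κt lam eps t (y t, w t)) (Set.Ico 0 T) t := by
    intro t ht
    exact (hy t ht).prodMk (hw t ht)
  have part1 : ∀ r ∈ Set.Ico (0 : ℝ) T,
      HasDerivWithinAt (fun t => ham κt lam (y t, w t)) (-A * (w r) ^ 2 / (r + eps))
          (Set.Ico 0 T) r ∧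
      -A * (w r) ^ 2 / (r + eps) ≤ 0 ∧
      ham κt lam (y r, w r) ≤ ham κt lam (c, 0) := by
    intro r hr
    refine ⟨ODEAux.hamDeriv heps hr.1 (hZloc r hr), ?_, ?_⟩
    · apply div_nonpos_of_nonpos_of_nonneg
      · nlinarith [mul_nonneg hA.le (sq_nonneg (w r))]
      · linarith [hr.1]
    · have h := ODEAux.ham_mono hA heps (convex_Ico (0:ℝ) T) (fun x hx => hx.1)
        ⟨le_rfl, hT⟩ hZloc r hr
      have h2 : ham κt lam (y 0, w 0) = ham κt lam (c, 0) := by rw [hy0, hw0]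
      exact h.trans (le_of_eq h2)
  constructor
  · exact part1
  obtain ⟨Z, hZ0, hZd, hZham, huniq⟩ := ODEAux.global_sol (lam := lam) (c := c) hA hκt heps
  refine ⟨fun t => (Z t).1, fun t => (Z t).2, ?_, ?_, ?_, ?_, ?_, ?_⟩
  · intro r hr
    exact ⟨ODEAux.hasDerivWithinAt_fst (hZd r hr), ODEAux.hasDerivWithinAt_snd (hZd r hr)⟩
  · show (Z 0).1 = c; rw [hZ0]
  · show (Z 0).2 = 0; rw [hZ0]
  · intro r hr
    have hsub : Set.Icc (0:ℝ) r ⊆ Set.Ico 0 T := fun u hu => ⟨hu.1, lt_of_le_of_lt hu.2 hr.2⟩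
    have hball1 : ∀ u ∈ Set.Ico (0:ℝ) r, ‖((y u, w u) : ℝ × ℝ)‖ ≤ bR κt lam c := by
      intro u hu
      have h3 : ham κt lam (y u, w u) ≤ ham κt lam (c, 0) :=
        (part1 u ⟨hu.1, lt_trans hu.2 hr.2⟩).2.2
      rw [ham_init] at h3
      exact norm_le_of_ham_le hκt h3
    have heqr := ODEAux.uniq_sol (b := r) hA heps (bR_nonneg κt lam c)
      (fun u hu => ((hZloc u (hsub hu)).continuousWithinAt).mono hsub)
      (fun u hu => ((hZd u hu.1).continuousWithinAt).mono (fun x hx => hx.1))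
      (fun u hu => (hZloc u ⟨hu.1, lt_trans hu.2 hr.2⟩).mono_of_mem_nhdsWithin
        (Ico_mem_nhdsGE_of_mem ⟨hu.1, lt_trans hu.2 hr.2⟩))
      (fun u hu => (hZd u hu.1).mono (Set.Ici_subset_Ici.mpr hu.1))
      hball1
      (fun u hu => norm_le_of_ham_le hκt ((ham_init κt lam c) ▸ hZham u hu.1))
      (by rw [hy0, hw0, hZ0])
      ⟨hr.1, le_rfl⟩
    exact ⟨(congrArg Prod.fst heqr).symm, (congrArg Prod.snd heqr).symm⟩
  · intro r hr
    exact (hZham r hr).trans (le_of_eq (ham_init κt lam c).symm)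
  · intro Y' W' h' h0y h0w r hr
    have hZ'd : ∀ u ∈ Set.Ici (0:ℝ), HasDerivWithinAt (fun t => (Y' t, W' t))
        (odeF A κt lam eps u (Y' u, W' u)) (Set.Ici 0) u :=
      fun u hu => ((h' u hu).1).prodMk ((h' u hu).2)
    have heqr := huniq (fun t => (Y' t, W' t))
      (show (Y' 0, W' 0) = ((c:ℝ), (0:ℝ)) by rw [h0y, h0w]) hZ'd r hr
    exact ⟨congrArg Prod.fst heqr, congrArg Prod.snd heqr⟩


end
end
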